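/- arXiv:2203.05500 — 2 statements merged into one kernel-verified Lean document; each statement's English description precedes it below -/
import Mathlib

section
/- Let G be a finite group, ω a normalized 3-cocycle on G with values in ℂˣ, and g ∈ G an element of order m. Then the m-th power of θ_g is a 2-coboundary on the centralizer C(g): there exists a map f : C(g) → ℂˣ with f(1) = 1 such that θ_g(x,y)^m = f(x)·f(y)/f(x*y) for all x, y ∈ C(g). In particular, the order of the cohomology class of θ_g in H²(C(g), ℂˣ) divides the order of g. -/
/-- Conjugation: `g^x = x⁻¹ * g * x`. -/
def cjg {G : Type*} [Group G] (g x : G) : G := x⁻¹ * g * x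

/-- A normalized 3-cocycle on `G` with values in `ℂˣ`. -/
def IsNormalized3Cocycle {G : Type*} [Group G] (ω : G → G → G → ℂˣ) : Prop :=
  (∀ x y z w, ω y z w * ω x (y * z) w * ω x y z = ω (x * y) z w * ω x y (z * w)) ∧
  (∀ x y z, (x = 1 ∨ y = 1 ∨ z = 1) → ω x y z = 1)

/-- `θ_g(x,y) = ω(g,x,y)·ω(x,y,g^{xy}) / ω(x,g^x,y)`. -/
def theta {G : Type*} [Group G] (ω : G → G → G → ℂˣ) (g x y : G) : ℂˣ :=
  ω g x y * ω x y (cjg g (x * y)) / ω x (cjg g x) y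

/-- `γ_g(x,y) = ω(x,y,g)·ω(g,x^g,y^g) / ω(x,g,y^g)`. -/
def gam {G : Type*} [Group G] (ω : G → G → G → ℂˣ) (g x y : G) : ℂˣ :=
  ω x y g * ω g (cjg x g) (cjg y g) / ω x g (cjg y g)

/-- A 2-coboundary of `G` with values in `ℂˣ`. -/
def Is2Coboundary {G : Type*} [Group G] (β : G → G → ℂˣ) : Prop :=
  ∃ f : G → ℂˣ, f 1 = 1 ∧ ∀ x y, β x y = f x * f y / f (x * y)

/-- A (normalized) 2-cocycle of `G` with values in `ℂˣ`. -/
def Is2Cocycle {G : Type*} [Group G] (β : G → G → ℂˣ) : Prop :=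
  (∀ x, β x 1 = 1 ∧ β 1 x = 1) ∧
  (∀ x y z, β x y * β (x * y) z = β y z * β x (y * z))

/-- An ω-admissible pair `(τ, ν)` for a subgroup `A`. -/
def IsAdmissiblePair {G : Type*} [Group G] (ω : G → G → G → ℂˣ) (A : Subgroup G)
    (τ : A → G → ℂˣ) (ν : A → (G →* ℂˣ)) : Prop :=
  (∀ x, τ 1 x = 1) ∧ (∀ a, τ a 1 = 1) ∧
  (∀ (a : A) (x y : G), theta ω (a : G) x y = τ a x * τ a y / τ a (x * y)) ∧
  (ν 1 = 1) ∧
  (∀ (a b : A) (g : G),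
    theta ω g (a : G) (b : G) * (τ a g * τ b g / τ (a * b) g)
      = ν a g * ν b g / ν (a * b) g)

/-! For `a, b` commuting with `x, y`, six instances of the 3-cocycle identity show that
`θ_{ab}(x,y) = θ_a(x,y) θ_b(x,y) · γ_x(a,b) γ_y(a,b) / γ_{xy}(a,b)`: `g ↦ θ_g` is multiplicative
on commuting elements up to the coboundary of `x ↦ γ_x(a,b)`. Iterating along the powers of `g`,
`θ_{g^n}` is `θ_g^n` times the coboundary of `x ↦ ∏_{j<n} γ_x(g,g^j)`, and for `n = orderOf g`
the left side is `θ_1 = 1`. -/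

section

variable {G : Type*} [Group G] {ω : G → G → G → ℂˣ}

lemma cjg_eq_self_of_commute {g x : G} (h : Commute g x) : cjg g x = g := by
  rw [cjg, mul_assoc, h.eq, ← mul_assoc, inv_mul_cancel, one_mul]

def coboundary3 (ω : G → G → G → ℂˣ) (x y z w : G) : ℂˣ :=
  ω y z w * ω x (y * z) w * ω x y z / (ω (x * y) z w * ω x y (z * w))

lemma IsNormalized3Cocycle.coboundary3_eq_one (hω : IsNormalized3Cocycle ω) (x y z w : G) :
    coboundary3 ω x y z w = 1 :=
  div_eq_one.mpr (hω.1 x y z w)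

lemma theta_one_left (hω : IsNormalized3Cocycle ω) (x y : G) : theta ω 1 x y = 1 := by
  simp [theta, cjg, hω.2]

lemma gam_one_left (hω : IsNormalized3Cocycle ω) (a b : G) : gam ω 1 a b = 1 := by
  simp [gam, cjg, hω.2]

section commuting

variable {a b x y : G} (hax : Commute a x) (hay : Commute a y) (hbx : Commute b x)
  (hby : Commute b y)
include hax hay hbx hby

lemma theta_gam_div_eq_prod_coboundary3 :
    theta ω a x y * theta ω b x y * gam ω x a b * gam ω y a b
        / (theta ω (a * b) x y * gam ω (x * y) a b)
      = coboundary3 ω x y a b * coboundary3 ω x a b y * coboundary3 ω a x y b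
          * coboundary3 ω a b x y / (coboundary3 ω x a y b * coboundary3 ω a x b y) := by
  simp only [theta, gam, coboundary3, cjg_eq_self_of_commute hax, cjg_eq_self_of_commute hay,
    cjg_eq_self_of_commute hbx, cjg_eq_self_of_commute hby,
    cjg_eq_self_of_commute (hax.mul_right hay), cjg_eq_self_of_commute (hbx.mul_right hby),
    cjg_eq_self_of_commute (hax.mul_left hbx),
    cjg_eq_self_of_commute ((hax.mul_right hay).mul_left (hbx.mul_right hby)),
    hax.eq, hay.eq, hbx.eq, hby.eq]
  apply Units.ext
  push_cast
  field_simp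

lemma theta_mul_of_commute (hω : IsNormalized3Cocycle ω) :
    theta ω (a * b) x y
      = theta ω a x y * theta ω b x y * (gam ω x a b * gam ω y a b / gam ω (x * y) a b) := by
  have h := theta_gam_div_eq_prod_coboundary3 (ω := ω) hax hay hbx hby
  simp only [hω.coboundary3_eq_one, mul_one, div_one, div_eq_one] at h
  rw [mul_div_assoc', eq_div_iff_mul_eq', ← mul_assoc, h]

end commuting

lemma theta_pow_of_commute (hω : IsNormalized3Cocycle ω) {g x y : G} (hx : Commute g x)
    (hy : Commute g y) (n : ℕ) :
    theta ω (g ^ n) x y = theta ω g x y ^ n *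
      ∏ j ∈ Finset.range n, gam ω x g (g ^ j) * gam ω y g (g ^ j) / gam ω (x * y) g (g ^ j) := by
  induction n with
  | zero => simp [theta_one_left hω]
  | succ n ih =>
    rw [pow_succ', theta_mul_of_commute hx hy (hx.pow_left n) (hy.pow_left n) hω, ih,
      Finset.prod_range_succ, pow_succ]
    ac_rfl

end

theorem theta_order_pow_coboundary_general {G : Type*} [Group G]
    (ω : G → G → G → ℂˣ) (hω : IsNormalized3Cocycle ω) (g : G) :
    ∃ f : ↥(Subgroup.centralizer {g}) → ℂˣ, f 1 = 1 ∧
      ∀ x y : ↥(Subgroup.centralizer {g}),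
        theta ω g (x : G) (y : G) ^ (orderOf g) = f x * f y / f (x * y) := by
  refine ⟨fun x => (∏ j ∈ Finset.range (orderOf g), gam ω x g (g ^ j))⁻¹,
    by simp [gam_one_left hω], fun x y => ?_⟩
  have h := theta_pow_of_commute hω (Subgroup.mem_centralizer_singleton_iff.mp x.2).symm
    (Subgroup.mem_centralizer_singleton_iff.mp y.2).symm (orderOf g)
  rw [pow_orderOf_eq_one, theta_one_left hω, Finset.prod_div_distrib, Finset.prod_mul_distrib] at h
  rw [eq_comm, mul_eq_one_iff_eq_inv, inv_div] at h
  simp only [Subgroup.coe_mul, h]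
  rw [div_inv_eq_mul, ← mul_inv, inv_mul_eq_div]

theorem theta_order_pow_coboundary {G : Type*} [Group G] [Finite G]
    (ω : G → G → G → ℂˣ) (hω : IsNormalized3Cocycle ω) (g : G) :
    ∃ f : ↥(Subgroup.centralizer {g}) → ℂˣ, f 1 = 1 ∧
      ∀ x y : ↥(Subgroup.centralizer {g}),
        theta ω g (x : G) (y : G) ^ (orderOf g) = f x * f y / f (x * y) :=
  theta_order_pow_coboundary_general ω hω g
end

section
/- Let G be a finite group, z ∈ Z(G) an element of order 2, and ω a normalized 3-cocycle on G with values in ℂˣ. Let f : G × G → ℂˣ be a normalized 2-cochain (f(1,x) = f(x,1) = 1 for all x) and set ω'(x,y,w) := ω(x,y,w)·f(y,w)·f(x,y*w)/(f(x*y,w)·f(x,y)), another normalized 3-cocycle. Let θ, γ and θ', γ' be the functions associated to ω and ω' respectively. Suppose τ, τ' : G → ℂˣ are maps with τ(1) = τ'(1) = 1, γ_z(x,y) = τ(x)·τ(y)/τ(x*y), and γ'_z(x,y) = τ'(x)·τ'(y)/τ'(x*y) for all x, y ∈ G. Assume furthermore that every group homomorphism χ : G → ℂˣ satisfies χ(g)²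 = 1 for all g ∈ G (i.e., the exponent of the character group of G divides 2). Then θ'_g(z,z)·τ'(g)² = θ_g(z,z)·τ(g)² for all g ∈ G; that is, the 2-cocycle β ∈ Z²(A, Ĝ) with A = {1,z} is independent of all the choices made. -/
section

variable {G M : Type*} [Group G] [CommGroup M]

def twistByCoboundary (ω : G → G → G → M) (f : G → G → M) (x y w : G) : M :=
  ω x y w * f y w * f x (y * w) / (f (x * y) w * f x y)

def commRatio (f : G → G → M) (z x : G) : M := f x z / f z x

theorem cjg_eq_self_of_mem_center {z : G} (hz : z ∈ Subgroup.center G) (g : G) : cjg g z = g := by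
  rw [cjg, mul_assoc, Subgroup.mem_center_iff.mp hz g, inv_mul_cancel_left]

theorem gam_twistByCoboundary {z : G} (hz : z ∈ Subgroup.center G) (ω : G → G → G → ℂˣ)
    (f : G → G → ℂˣ) (x y : G) :
    gam (twistByCoboundary ω f) z x y =
      gam ω z x y * (commRatio f z x * commRatio f z y / commRatio f z (x * y)) := by
  have hzc := Subgroup.mem_center_iff.mp hz
  simp only [gam, twistByCoboundary, commRatio, cjg_eq_self_of_mem_center hz, hzc]
  apply Additive.ofMul.injective
  simp only [ofMul_mul, ofMul_div]
  abel

theorem theta_twistByCoboundary {z : G} (hz : z ∈ Subgroup.center G) (hz2 : z * z = 1)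
    (ω : G → G → G → ℂˣ) (f : G → G → ℂˣ) {g : G} (hf : f g 1 = f 1 g) :
    theta (twistByCoboundary ω f) g z z * commRatio f z g ^ 2 = theta ω g z z := by
  have hzc := Subgroup.mem_center_iff.mp hz
  simp only [theta, twistByCoboundary, commRatio, hz2, cjg_eq_self_of_mem_center hz,
    cjg_eq_self_of_mem_center (one_mem _), hzc, hf]
  apply Additive.ofMul.injective
  simp only [ofMul_mul, ofMul_div, ofMul_pow]
  abel

theorem map_mul_of_coboundary_eq_mul {τ τ' μ : G → M}
    (h : ∀ x y, τ' x * τ' y / τ' (x * y) = τ x * τ y / τ (x * y) * (μ x * μ y / μ (x * y)))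
    (x y : G) :
    τ' (x * y) / (τ (x * y) * μ (x * y)) = τ' x / (τ x * μ x) * (τ' y / (τ y * μ y)) := by
  have key : τ' x / (τ x * μ x) * (τ' y / (τ y * μ y)) / (τ' (x * y) / (τ (x * y) * μ (x * y))) =
      τ' x * τ' y / τ' (x * y) / (τ x * τ y / τ (x * y) * (μ x * μ y / μ (x * y))) := by
    apply Additive.ofMul.injective
    simp only [ofMul_mul, ofMul_div]
    abel
  rw [h, div_self'] at key
  exact (div_eq_one.mp key).symm

end

theorem beta_independent_of_choices_general {G : Type*} [Group G]
    (z : G) (hz : z ∈ Subgroup.center G) (hz2 : z * z = 1)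
    (ω ω' : G → G → G → ℂˣ)
    (f : G → G → ℂˣ) (hf : ∀ x : G, f 1 x = 1 ∧ f x 1 = 1)
    (hω' : ∀ x y w : G,
      ω' x y w = ω x y w * f y w * f x (y * w) / (f (x * y) w * f x y))
    (τ τ' : G → ℂˣ)
    (hτ : ∀ x y : G, gam ω z x y = τ x * τ y / τ (x * y))
    (hτ' : ∀ x y : G, gam ω' z x y = τ' x * τ' y / τ' (x * y))
    (hexp : ∀ χ : G →* ℂˣ, ∀ g : G, (χ g) ^ 2 = 1) :
    ∀ g : G, theta ω' g z z * (τ' g) ^ 2 = theta ω g z z * (τ g) ^ 2 := by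
  intro g
  obtain rfl : ω' = twistByCoboundary ω f := funext fun x ↦ funext fun y ↦ funext (hω' x y)
  have hχ := map_mul_of_coboundary_eq_mul (τ := τ) (τ' := τ') (μ := commRatio f z) fun x y ↦ by
    rw [← hτ, ← hτ', gam_twistByCoboundary hz]
  have hsq : (τ' g / (τ g * commRatio f z g)) ^ 2 = 1 :=
    hexp (MonoidHom.mk' (fun x ↦ τ' x / (τ x * commRatio f z x)) hχ) g
  rw [div_pow, div_eq_one, mul_pow] at hsq
  rw [← theta_twistByCoboundary hz hz2 ω f ((hf g).2.trans (hf g).1.symm), hsq,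
    mul_right_comm, mul_assoc]

theorem beta_independent_of_choices {G : Type*} [Group G] [Finite G]
    (z : G) (hz : z ∈ Subgroup.center G) (hz2 : z * z = 1) (hz1 : z ≠ 1)
    (ω ω' : G → G → G → ℂˣ) (hω : IsNormalized3Cocycle ω)
    (f : G → G → ℂˣ) (hf : ∀ x : G, f 1 x = 1 ∧ f x 1 = 1)
    (hω' : ∀ x y w : G,
      ω' x y w = ω x y w * f y w * f x (y * w) / (f (x * y) w * f x y))
    (τ τ' : G → ℂˣ) (hτ1 : τ 1 = 1) (hτ'1 : τ' 1 = 1)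
    (hτ : ∀ x y : G, gam ω z x y = τ x * τ y / τ (x * y))
    (hτ' : ∀ x y : G, gam ω' z x y = τ' x * τ' y / τ' (x * y))
    (hexp : ∀ χ : G →* ℂˣ, ∀ g : G, (χ g) ^ 2 = 1) :
    ∀ g : G, theta ω' g z z * (τ' g) ^ 2 = theta ω g z z * (τ g) ^ 2 :=
  beta_independent_of_choices_general z hz hz2 ω ω' f hf hω' τ τ' hτ hτ' hexp
end
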